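/- If a sequent J = (Γ ⇒ Δ) is derivable in the cut-free sequent calculus LK⁻, then every J-interpretation satisfies J; that is, for every structure S, every S-assignment A of the free variables of J, and every S-subvaluation assigning a truth value to each formula of J at A, if all formulas of Γ are assigned true then some formula of Δ is assigned true. -/

import Mathlib

open FirstOrder FirstOrder.Language

namespace PaperSat

variable {L : Language} {α : Type*}

/-- A formula in context: a bounded formula together with its number of bound variables. -/
abbrev Fml (L : Language) (α : Type*) : Type _ := Σ n, L.BoundedFormula α n

/-- `Sub φ ψ` means that `φ` is a subformula (or subexpression) of `ψ`. -/
inductive Sub {L : Language} {α : Type*} : Fml L α → Fml L α → Prop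
  | refl (φ : Fml L α) : Sub φ φ
  | impLeft {φ : Fml L α} {n : ℕ} (f g : L.BoundedFormula α n) :
      Sub φ ⟨n, f⟩ → Sub φ ⟨n, f.imp g⟩
  | impRight {φ : Fml L α} {n : ℕ} (f g : L.BoundedFormula α n) :
      Sub φ ⟨n, g⟩ → Sub φ ⟨n, f.imp g⟩
  | allOf {φ : Fml L α} {n : ℕ} (f : L.BoundedFormula α (n + 1)) :
      Sub φ ⟨n + 1, f⟩ → Sub φ ⟨n, f.all⟩

/-- Membership in the subformula closure of a class `Φ` of formulas. -/
def InCl (Φ : Set (Fml L α)) (φ : Fml L α) : Prop := ∃ ψ ∈ Φ, Sub φ ψ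

variable (M : Type*) [L.Structure M]

/-- `IsSatRel M Φ T` says that `T` is a `Φ`-satisfaction relation for the structure `M`:
a relation on pairs consisting of a subformula of a member of `Φ` and an assignment,
satisfying the usual Tarskian recursion clauses. -/
def IsSatRel (Φ : Set (Fml L α))
    (T : ∀ n, L.BoundedFormula α n → (α → M) → (Fin n → M) → Prop) : Prop :=
  (∀ (n : ℕ) (v : α → M) (xs : Fin n → M), InCl Φ ⟨n, BoundedFormula.falsum⟩ →
      ¬ T n BoundedFormula.falsum v xs) ∧
  (∀ (n : ℕ) (t₁ t₂ : L.Term (α ⊕ Fin n)) (v : α → M) (xs : Fin n → M),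
      InCl Φ ⟨n, t₁.bdEqual t₂⟩ →
      (T n (t₁.bdEqual t₂) v xs ↔ t₁.realize (Sum.elim v xs) = t₂.realize (Sum.elim v xs))) ∧
  (∀ (n l : ℕ) (R : L.Relations l) (ts : Fin l → L.Term (α ⊕ Fin n)) (v : α → M)
      (xs : Fin n → M), InCl Φ ⟨n, BoundedFormula.rel R ts⟩ →
      (T n (BoundedFormula.rel R ts) v xs ↔
        Structure.RelMap R fun i => (ts i).realize (Sum.elim v xs))) ∧
  (∀ (n : ℕ) (f g : L.BoundedFormula α n) (v : α → M) (xs : Fin n → M),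
      InCl Φ ⟨n, f.imp g⟩ → (T n (f.imp g) v xs ↔ (T n f v xs → T n g v xs))) ∧
  (∀ (n : ℕ) (f : L.BoundedFormula α (n + 1)) (v : α → M) (xs : Fin n → M),
      InCl Φ ⟨n, f.all⟩ → (T n f.all v xs ↔ ∀ x : M, T (n + 1) f v (Fin.snoc xs x)))

end PaperSat

namespace PaperLK

open FirstOrder FirstOrder.Language

variable {L : Language}

/-- Instantiation of the bound variable of a formula with one extra bound variable
by a term with free variables in `ℕ`. -/
def inst1 (f : L.BoundedFormula ℕ 1) (t : L.Term ℕ) : L.Formula ℕ :=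
  f.toFormula.subst (Sum.elim Term.var fun _ => t)

/-- The equality formula between two terms, as a formula with free variables in `ℕ`. -/
def eqT (t u : L.Term ℕ) : L.Formula ℕ :=
  (t.relabel Sum.inl).bdEqual (u.relabel Sum.inl)

/-- Gentzen's sequent calculus `LK` for classical first-order logic, on sequents of formulas
with free variables in `ℕ`.  The boolean parameter `cut` controls whether the cut rule is
available (`LK false eq` is the cut-free calculus `LK⁻`), and the boolean parameter `eq`
controls whether the rules for the identity predicate are available (`eq = false` gives logic
without identity). -/
inductive LK (cut eq : Bool) : List (L.Formula ℕ) → List (L.Formula ℕ) → Prop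
  | ax (φ : L.Formula ℕ) : LK cut eq [φ] [φ]
  | falsumL : LK cut eq [⊥] []
  | wL {Γ Δ} (φ) : LK cut eq Γ Δ → LK cut eq (φ :: Γ) Δ
  | wR {Γ Δ} (φ) : LK cut eq Γ Δ → LK cut eq Γ (Δ ++ [φ])
  | cL {Γ Δ} {φ} : LK cut eq (φ :: φ :: Γ) Δ → LK cut eq (φ :: Γ) Δ
  | cR {Γ Δ} {φ} : LK cut eq Γ (Δ ++ [φ, φ]) → LK cut eq Γ (Δ ++ [φ])
  | eL {Γ₁ Γ₂ Δ} {φ ψ} : LK cut eq (Γ₁ ++ φ :: ψ :: Γ₂) Δ → LK cut eq (Γ₁ ++ ψ :: φ :: Γ₂) Δ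
  | eR {Γ Δ₁ Δ₂} {φ ψ} : LK cut eq Γ (Δ₁ ++ φ :: ψ :: Δ₂) → LK cut eq Γ (Δ₁ ++ ψ :: φ :: Δ₂)
  | impL {Γ Γ' Δ Δ'} {f g : L.Formula ℕ} :
      LK cut eq Γ (Δ ++ [f]) → LK cut eq (g :: Γ') Δ' →
      LK cut eq ((f.imp g) :: (Γ ++ Γ')) (Δ ++ Δ')
  | impR {Γ Δ} {f g : L.Formula ℕ} :
      LK cut eq (f :: Γ) (Δ ++ [g]) → LK cut eq Γ (Δ ++ [f.imp g])
  | allL {Γ Δ} {f : L.BoundedFormula ℕ 1} (t : L.Term ℕ) :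
      LK cut eq ((inst1 f t) :: Γ) Δ → LK cut eq ((BoundedFormula.all f) :: Γ) Δ
  | allR {Γ Δ} {f : L.BoundedFormula ℕ 1} (k : ℕ)
      (hfresh : ∀ ψ ∈ (BoundedFormula.all f) :: (Γ ++ Δ), k ∉ ψ.freeVarFinset) :
      LK cut eq Γ (Δ ++ [inst1 f (Term.var k)]) →
      LK cut eq Γ (Δ ++ [BoundedFormula.all f])
  | cut' {Γ Γ' Δ Δ'} {φ : L.Formula ℕ} (hc : cut = true) :
      LK cut eq Γ (Δ ++ [φ]) → LK cut eq (φ :: Γ') Δ' → LK cut eq (Γ ++ Γ') (Δ ++ Δ')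
  | eqRefl (he : eq = true) (t : L.Term ℕ) : LK cut eq [] [eqT t t]
  | eqSubst {Γ Δ} {f : L.BoundedFormula ℕ 1} (he : eq = true) (t u : L.Term ℕ) :
      LK cut eq Γ (Δ ++ [inst1 f t]) → LK cut eq ((eqT t u) :: Γ) (Δ ++ [inst1 f u])

/-- Provability of a formula from a theory (a class of formulas), via the full sequent
calculus (with cut and with the rules for identity). -/
def ThmOf (Θ : Set (L.Formula ℕ)) (σ : L.Formula ℕ) : Prop :=
  ∃ Γ : List (L.Formula ℕ), (∀ γ ∈ Γ, γ ∈ Θ) ∧ LK true true Γ [σ]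

/-- A formula is a sentence if it has no free variables. -/
def ClosedF (φ : L.Formula ℕ) : Prop := φ.freeVarFinset = ∅

/-- A theory is consistent if there is no sentence such that both it and its negation
are provable. -/
def ConsistentT (Θ : Set (L.Formula ℕ)) : Prop :=
  ¬ ∃ σ : L.Formula ℕ, ClosedF σ ∧ ThmOf Θ σ ∧ ThmOf Θ σ.not

/-- The class of formulas not containing the identity predicate. -/
inductive EqFree : ∀ {n : ℕ}, L.BoundedFormula ℕ n → Prop
  | falsum {n} : EqFree (n := n) BoundedFormula.falsum
  | rel {n l} (R : L.Relations l) (ts : Fin l → L.Term (ℕ ⊕ Fin n)) :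
      EqFree (BoundedFormula.rel R ts)
  | imp {n} {f g : L.BoundedFormula ℕ n} : EqFree f → EqFree g → EqFree (f.imp g)
  | all {n} {f : L.BoundedFormula ℕ (n + 1)} : EqFree f → EqFree (BoundedFormula.all f)

end PaperLK

namespace PaperSat

open FirstOrder FirstOrder.Language

variable {L : Language}

/-- `IsSubVal M Tt Tf` says that the pair of predicates `Tt` (assigned the value *true*) and
`Tf` (assigned the value *false*) is a subvaluation for the structure `M`: a partial
assignment of truth values to formula–assignment pairs that is consistent with the Tarskian
clauses in the weak sense (e.g. a disjunction may be assigned *true* provided at least one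
disjunct is assigned *true*, and may be assigned *false* only if both disjuncts are). -/
def IsSubVal (M : Type*) [L.Structure M]
    (Tt Tf : ∀ n, L.BoundedFormula ℕ n → (ℕ → M) → (Fin n → M) → Prop) : Prop :=
  (∀ n φ v xs, ¬ (Tt n φ v xs ∧ Tf n φ v xs)) ∧
  (∀ (n : ℕ) (v : ℕ → M) (xs : Fin n → M), ¬ Tt n BoundedFormula.falsum v xs) ∧
  (∀ (n : ℕ) (t₁ t₂ : L.Term (ℕ ⊕ Fin n)) (v : ℕ → M) (xs : Fin n → M),
    (Tt n (t₁.bdEqual t₂) v xs → t₁.realize (Sum.elim v xs) = t₂.realize (Sum.elim v xs)) ∧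
    (Tf n (t₁.bdEqual t₂) v xs → t₁.realize (Sum.elim v xs) ≠ t₂.realize (Sum.elim v xs))) ∧
  (∀ (n l : ℕ) (R : L.Relations l) (ts : Fin l → L.Term (ℕ ⊕ Fin n)) (v : ℕ → M)
      (xs : Fin n → M),
    (Tt n (BoundedFormula.rel R ts) v xs →
      Structure.RelMap R (fun i => (ts i).realize (Sum.elim v xs))) ∧
    (Tf n (BoundedFormula.rel R ts) v xs →
      ¬ Structure.RelMap R (fun i => (ts i).realize (Sum.elim v xs)))) ∧
  (∀ (n : ℕ) (f g : L.BoundedFormula ℕ n) (v : ℕ → M) (xs : Fin n → M),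
    (Tt n (f.imp g) v xs → (Tf n f v xs ∨ Tt n g v xs)) ∧
    (Tf n (f.imp g) v xs → (Tt n f v xs ∧ Tf n g v xs))) ∧
  (∀ (n : ℕ) (f : L.BoundedFormula ℕ (n + 1)) (v : ℕ → M) (xs : Fin n → M),
    (Tt n (BoundedFormula.all f) v xs → ∀ x : M, Tt (n + 1) f v (Fin.snoc xs x)) ∧
    (Tf n (BoundedFormula.all f) v xs → ∃ x : M, Tf (n + 1) f v (Fin.snoc xs x)))

end PaperSat

/-!
A subvaluation cannot disagree with Tarskian truth: its clauses for atomic formulas pin the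
value of every atom it assigns, and its weak clauses for `⟹` and `∀` propagate this agreement
to every formula (induction on formulas). So a `J`-interpretation assigns *true* exactly to
the formulas of `J` that are true in `M` under `v`, and the theorem reduces to the ordinary
soundness of `LK`, proved rule by rule.
-/

namespace FirstOrder.Language.BoundedFormula

variable {L : Language} {α M : Type*} [L.Structure M]

theorem realize_congr_of_eqOn_freeVarFinset [DecidableEq α] {n : ℕ} (φ : L.BoundedFormula α n)
    {v w : α → M} {xs : Fin n → M} (h : ∀ a ∈ φ.freeVarFinset, v a = w a) :
    φ.Realize v xs ↔ φ.Realize w xs :=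
  (realize_restrictFreeVar (f := id) (v := fun a => v a) v fun _ => rfl).symm.trans
    (realize_restrictFreeVar w fun a => h a a.2)

theorem realize_update_of_notMem_freeVarFinset [DecidableEq α] {n : ℕ}
    {φ : L.BoundedFormula α n} {k : α} (hk : k ∉ φ.freeVarFinset) (v : α → M) (x : M)
    (xs : Fin n → M) : φ.Realize (Function.update v k x) xs ↔ φ.Realize v xs :=
  realize_congr_of_eqOn_freeVarFinset φ fun _ ha =>
    Function.update_of_ne (ne_of_mem_of_not_mem ha hk) x v

end FirstOrder.Language.BoundedFormula

namespace PaperLK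

variable {L : Language} {M : Type*} [L.Structure M]

theorem realize_inst1 (f : L.BoundedFormula ℕ 1) (t : L.Term ℕ) (v : ℕ → M) :
    (inst1 f t).Realize v ↔ f.Realize v fun _ => t.realize v := by
  rw [inst1, Formula.Realize, BoundedFormula.realize_subst]
  exact BoundedFormula.realize_toFormula _ _

theorem realize_eqT (t u : L.Term ℕ) (v : ℕ → M) :
    (eqT t u).Realize v ↔ t.realize v = u.realize v := by
  simp [eqT, Formula.Realize, BoundedFormula.realize_bdEqual, Term.realize_relabel]

variable (M) in
def SeqHolds (v : ℕ → M) (Γ Δ : List (L.Formula ℕ)) : Prop :=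
  (∀ φ ∈ Γ, φ.Realize v) → ∃ φ ∈ Δ, φ.Realize v

namespace SeqHolds

variable {v : ℕ → M} {Γ Γ' Δ Δ' : List (L.Formula ℕ)}

theorem mono (h : SeqHolds M v Γ Δ) (hΓ : Γ ⊆ Γ') (hΔ : Δ ⊆ Δ') :
    SeqHolds M v Γ' Δ' :=
  fun hΓ' =>
    let ⟨φ, hφ, hφv⟩ := h fun ψ hψ => hΓ' ψ (hΓ hψ)
    ⟨φ, hΔ hφ, hφv⟩

theorem cons_left_iff {φ : L.Formula ℕ} :
    SeqHolds M v (φ :: Γ) Δ ↔ (φ.Realize v → SeqHolds M v Γ Δ) := by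
  simp only [SeqHolds, List.forall_mem_cons]
  tauto

theorem append_singleton_right_iff {φ : L.Formula ℕ} :
    SeqHolds M v Γ (Δ ++ [φ]) ↔ (¬ φ.Realize v → SeqHolds M v Γ Δ) := by
  simp only [SeqHolds, List.mem_append, List.mem_singleton, or_and_right, exists_or,
    exists_eq_left]
  grind

theorem update_iff {k : ℕ} (hk : ∀ ψ ∈ Γ ++ Δ, k ∉ ψ.freeVarFinset) (x : M) :
    SeqHolds M (Function.update v k x) Γ Δ ↔ SeqHolds M v Γ Δ := by
  have hk' (ψ) (hψ : ψ ∈ Γ ++ Δ) : ψ.Realize (Function.update v k x) ↔ ψ.Realize v :=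
    BoundedFormula.realize_update_of_notMem_freeVarFinset (hk ψ hψ) v x _
  exact imp_congr (forall₂_congr fun ψ hψ => hk' ψ (List.mem_append_left _ hψ))
    (exists_congr fun ψ => and_congr_right fun hψ => hk' ψ (List.mem_append_right _ hψ))

theorem cut {φ : L.Formula ℕ} (h₁ : SeqHolds M v Γ (Δ ++ [φ]))
    (h₂ : SeqHolds M v (φ :: Γ') Δ') : SeqHolds M v (Γ ++ Γ') (Δ ++ Δ') := by
  by_cases hφ : φ.Realize v
  · exact (cons_left_iff.1 h₂ hφ).mono (List.subset_append_right _ _)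
      (List.subset_append_right _ _)
  · exact (append_singleton_right_iff.1 h₁ hφ).mono (List.subset_append_left _ _)
      (List.subset_append_left _ _)

theorem imp_left {f g : L.Formula ℕ} (h₁ : SeqHolds M v Γ (Δ ++ [f]))
    (h₂ : SeqHolds M v (g :: Γ') Δ') : SeqHolds M v (f.imp g :: (Γ ++ Γ')) (Δ ++ Δ') := by
  by_cases hf : f.Realize v
  · by_cases hg : g.Realize v
    · exact (cons_left_iff.1 h₂ hg).mono
        (List.subset_cons_of_subset _ (List.subset_append_right _ _))
        (List.subset_append_right _ _)
    · exact cons_left_iff.2 fun hfg => absurd (hfg hf) hg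
  · exact (append_singleton_right_iff.1 h₁ hf).mono
      (List.subset_cons_of_subset _ (List.subset_append_left _ _))
      (List.subset_append_left _ _)

theorem imp_right {f g : L.Formula ℕ} (h : SeqHolds M v (f :: Γ) (Δ ++ [g])) :
    SeqHolds M v Γ (Δ ++ [f.imp g]) :=
  append_singleton_right_iff.2 fun hfg =>
    have ⟨hf, hg⟩ := Classical.not_imp.1 hfg
    append_singleton_right_iff.1 (cons_left_iff.1 h hf) hg

theorem all_left {f : L.BoundedFormula ℕ 1} (t : L.Term ℕ)
    (h : SeqHolds M v (inst1 f t :: Γ) Δ) : SeqHolds M v (BoundedFormula.all f :: Γ) Δ :=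
  cons_left_iff.2 fun hf => cons_left_iff.1 h ((realize_inst1 f t v).2 (hf _))

theorem all_right {f : L.BoundedFormula ℕ 1} {k : ℕ}
    (hk : ∀ ψ ∈ BoundedFormula.all f :: (Γ ++ Δ), k ∉ ψ.freeVarFinset)
    (h : ∀ x : M, SeqHolds M (Function.update v k x) Γ (Δ ++ [inst1 f (Term.var k)])) :
    SeqHolds M v Γ (Δ ++ [BoundedFormula.all f]) := by
  refine append_singleton_right_iff.2 fun hf => ?_
  obtain ⟨x, hx⟩ := not_forall.1 hf
  have hx' : ¬ (inst1 f (Term.var k)).Realize (Function.update v k x) := by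
    rw [realize_inst1, Term.realize_var, Function.update_self]
    exact (BoundedFormula.realize_update_of_notMem_freeVarFinset (φ := f)
      (hk _ List.mem_cons_self) _ _ _).not.2 hx
  exact (update_iff (fun ψ hψ => hk ψ (List.mem_cons_of_mem _ hψ)) x).1
    (append_singleton_right_iff.1 (h x) hx')

theorem eq_subst {f : L.BoundedFormula ℕ 1} {t u : L.Term ℕ}
    (h : SeqHolds M v Γ (Δ ++ [inst1 f t])) :
    SeqHolds M v (eqT t u :: Γ) (Δ ++ [inst1 f u]) := by
  refine cons_left_iff.2 fun htu => append_singleton_right_iff.2 fun hu =>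
    append_singleton_right_iff.1 h ?_
  rw [realize_inst1] at hu ⊢
  rwa [(realize_eqT t u v).1 htu]

end SeqHolds

variable (M) in
theorem LK.sound {cut eq : Bool} {Γ Δ : List (L.Formula ℕ)} (h : LK cut eq Γ Δ)
    (v : ℕ → M) : SeqHolds M v Γ Δ := by
  induction h generalizing v with
  | ax φ => exact fun hΓ => ⟨φ, List.mem_singleton_self _, hΓ φ (List.mem_singleton_self _)⟩
  | falsumL => exact fun hΓ => (hΓ ⊥ (List.mem_singleton_self _)).elim
  | wL _ _ ih => exact (ih v).mono (List.subset_cons_self _ _) (List.Subset.refl _)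
  | wR _ _ ih => exact (ih v).mono (List.Subset.refl _) (List.subset_append_left _ _)
  | cL _ ih => exact (ih v).mono (by simp [List.subset_def]) (List.Subset.refl _)
  | cR _ ih => exact (ih v).mono (List.Subset.refl _) (by simp [List.subset_def])
  | eL _ ih => exact (ih v).mono (by simp [List.subset_def]; tauto) (List.Subset.refl _)
  | eR _ ih => exact (ih v).mono (List.Subset.refl _) (by simp [List.subset_def]; tauto)
  | impL _ _ ih₁ ih₂ => exact (ih₁ v).imp_left (ih₂ v)
  | impR _ ih => exact (ih v).imp_right
  | allL t _ ih => exact (ih v).all_left t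
  | allR k hk _ ih => exact SeqHolds.all_right hk fun x => ih _
  | cut' _ _ _ ih₁ ih₂ => exact (ih₁ v).cut (ih₂ v)
  | eqRefl _ t =>
    exact fun _ => ⟨eqT t t, List.mem_singleton_self _, (realize_eqT t t v).2 rfl⟩
  | eqSubst _ t u _ ih => exact (ih v).eq_subst

end PaperLK

namespace PaperSat

section

variable {L : Language} {M : Type*} [L.Structure M]
  {Tt Tf : ∀ n, L.BoundedFormula ℕ n → (ℕ → M) → (Fin n → M) → Prop}

theorem IsSubVal.tt_imp_realize_and_tf_imp_not_realize (hsv : IsSubVal M Tt Tf) {n : ℕ}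
    (φ : L.BoundedFormula ℕ n) (v : ℕ → M) (xs : Fin n → M) :
    (Tt n φ v xs → φ.Realize v xs) ∧ (Tf n φ v xs → ¬ φ.Realize v xs) := by
  obtain ⟨-, hfalsum, hequal, hrel, himp, hall⟩ := hsv
  induction φ with
  | falsum => exact ⟨fun h => (hfalsum _ v xs h).elim, fun _ h => h⟩
  | equal t₁ t₂ => exact hequal _ t₁ t₂ v xs
  | rel R ts => exact hrel _ _ R ts v xs
  | imp f g ihf ihg =>
    refine ⟨fun h hf => ?_, fun h hfg => ?_⟩
    · rcases (himp _ f g v xs).1 h with hf' | hg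
      · exact absurd hf ((ihf xs).2 hf')
      · exact (ihg xs).1 hg
    · obtain ⟨hf, hg⟩ := (himp _ f g v xs).2 h
      exact (ihg xs).2 hg (hfg ((ihf xs).1 hf))
  | all f ih =>
    refine ⟨fun h x => (ih _).1 ((hall _ f v xs).1 h x), fun h hf => ?_⟩
    obtain ⟨x, hx⟩ := (hall _ f v xs).2 h
    exact (ih _).2 hx (hf x)

theorem IsSubVal.tt_iff_realize (hsv : IsSubVal M Tt Tf) {n : ℕ} {φ : L.BoundedFormula ℕ n}
    {v : ℕ → M} {xs : Fin n → M} (hφ : Tt n φ v xs ∨ Tf n φ v xs) :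
    Tt n φ v xs ↔ φ.Realize v xs :=
  have ⟨htt, htf⟩ := hsv.tt_imp_realize_and_tf_imp_not_realize φ v xs
  ⟨htt, fun h => hφ.resolve_right fun hf => htf hf h⟩

end

open PaperLK

theorem LKminus_sound_for_J_interpretations_general (L : Language) (Γ Δ : List (L.Formula ℕ))
    (h : LK (L := L) false false Γ Δ) :
    ∀ (M : Type) (_ : L.Structure M) (v : ℕ → M)
      (Tt Tf : ∀ n, L.BoundedFormula ℕ n → (ℕ → M) → (Fin n → M) → Prop),
      IsSubVal M Tt Tf →
      (∀ φ ∈ Γ ++ Δ, Tt 0 φ v (fun i => i.elim0) ∨ Tf 0 φ v (fun i => i.elim0)) →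
      (∀ φ ∈ Γ, Tt 0 φ v (fun i => i.elim0)) →
      ∃ φ ∈ Δ, Tt 0 φ v (fun i => i.elim0) := by
  intro M _ v Tt Tf hsv hassigned hΓ
  have tt_iff (φ) (hφ : φ ∈ Γ ++ Δ) : Tt 0 φ v (fun i => i.elim0) ↔ φ.Realize v := by
    rw [Formula.Realize, ← Unique.eq_default (fun i : Fin 0 => i.elim0)]
    exact hsv.tt_iff_realize (hassigned φ hφ)
  obtain ⟨δ, hδ, hδv⟩ :=
    h.sound M v fun φ hφ => (tt_iff φ (List.mem_append_left _ hφ)).1 (hΓ φ hφ)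
  exact ⟨δ, hδ, (tt_iff δ (List.mem_append_right _ hδ)).2 hδv⟩

/-- (Soundness of cut-free `LK⁻` for `J`-interpretations, in logic without
identity.)  If the sequent `J = (Γ ⇒ Δ)` is derivable in the cut-free calculus `LK⁻`, then
every `J`-interpretation satisfies `J`: for every structure `M`, every assignment `v` of the
free variables, and every subvaluation assigning a truth value to each formula of `J` at `v`,
if all formulas of `Γ` are assigned *true* then some formula of `Δ` is assigned *true*. -/
theorem LKminus_sound_for_J_interpretations (L : Language) (Γ Δ : List (L.Formula ℕ))
    (hEq : ∀ φ ∈ Γ ++ Δ, EqFree φ) (h : LK (L := L) false false Γ Δ) :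
    ∀ (M : Type) (_ : L.Structure M) (v : ℕ → M)
      (Tt Tf : ∀ n, L.BoundedFormula ℕ n → (ℕ → M) → (Fin n → M) → Prop),
      IsSubVal M Tt Tf →
      (∀ φ ∈ Γ ++ Δ, Tt 0 φ v (fun i => i.elim0) ∨ Tf 0 φ v (fun i => i.elim0)) →
      (∀ φ ∈ Γ, Tt 0 φ v (fun i => i.elim0)) →
      ∃ φ ∈ Δ, Tt 0 φ v (fun i => i.elim0) :=
  LKminus_sound_for_J_interpretations_general L Γ Δ h

end PaperSat
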